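/- arXiv:2406.19717 — 3 statements merged into one kernel-verified Lean document; each statement's English description precedes it below -/
import Mathlib

section
/- The integral χ(z) := ∫_L e^{izw}/(e^{2πw²}−1) dw, where L is the horizontal line {x + ib : x ∈ ℝ} with fixed 0 < b < 1/√2, converges absolutely for every z ∈ ℂ and defines an entire function of z. -/
open MeasureTheory

section RiemannChi
open Complex

lemma denom_ne (b : ℝ) (hb0 : 0 < b) (hb1 : b < 1 / Real.sqrt 2) (x : ℝ) :
    Complex.exp (2 * Real.pi * (x + Complex.I * b) ^ 2) - 1 ≠ 0 := by
  intro h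
  rw [sub_eq_zero, Complex.exp_eq_one_iff] at h
  obtain ⟨n, hn⟩ := h
  have hpi : (2 * (Real.pi:ℂ)) ≠ 0 := by
    have : (Real.pi:ℂ) ≠ 0 := by exact_mod_cast Real.pi_ne_zero
    simp [this]
  have hsq : ((x : ℂ) + Complex.I * b) ^ 2 = n * Complex.I :=
    mul_left_cancel₀ hpi (by linear_combination hn)
  rw [Complex.ext_iff] at hsq
  simp [pow_two, Complex.add_re, Complex.add_im, Complex.mul_re, Complex.mul_im] at hsq
  obtain ⟨h1, h2⟩ := hsq
  have h2pos : (0:ℝ) < Real.sqrt 2 := Real.sqrt_pos.2 (by norm_num)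
  have hbs : b * Real.sqrt 2 < 1 := (lt_div_iff₀ h2pos).1 hb1
  have hb2 : 2 * (b * b) < 1 := by
    nlinarith [Real.sq_sqrt (by norm_num : (0:ℝ) ≤ 2)]
  have hn0 : n ≠ 0 := by
    rintro rfl
    push_cast at h2
    have h3 : b * x = 0 := by linarith
    rcases mul_eq_zero.1 h3 with h | h
    · exact hb0.ne' h
    · subst h; nlinarith
  have hone : (1:ℝ) ≤ |(n:ℝ)| := by exact_mod_cast Int.one_le_abs hn0
  have hfac : (x - b) * (x + b) = 0 := by nlinarith
  rcases mul_eq_zero.1 hfac with h | h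
  · have hn' : (n:ℝ) = 2 * (b * b) := by nlinarith
    rw [hn', abs_of_pos (by nlinarith)] at hone
    linarith
  · have hn' : (n:ℝ) = -(2 * (b * b)) := by nlinarith
    rw [hn', abs_of_neg (by nlinarith)] at hone
    linarith

lemma re_arg (b x : ℝ) : (2 * (Real.pi:ℂ) * ((x:ℂ) + Complex.I * b) ^ 2).re
    = 2 * Real.pi * (x ^ 2 - b ^ 2) := by
  simp [pow_two, Complex.mul_re, Complex.mul_im, Complex.add_re, Complex.add_im]

lemma denom_cont (b : ℝ) : Continuous fun x : ℝ =>
    Complex.exp (2 * Real.pi * ((x:ℂ) + Complex.I * b) ^ 2) - 1 := by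
  fun_prop

lemma inv_bound (b : ℝ) (hb0 : 0 < b) (hb1 : b < 1 / Real.sqrt 2) :
    ∃ C : ℝ, 0 < C ∧ ∀ x : ℝ,
      ‖(Complex.exp (2 * Real.pi * ((x:ℂ) + Complex.I * b) ^ 2) - 1)⁻¹‖
        ≤ C * Real.exp (-(2 * Real.pi) * x ^ 2) := by
  set D : ℝ → ℂ := fun x => Complex.exp (2 * Real.pi * ((x:ℂ) + Complex.I * b) ^ 2) - 1 with hD
  have hne : ∀ x, D x ≠ 0 := denom_ne b hb0 hb1
  have hnormexp : ∀ x : ℝ, ‖Complex.exp (2 * Real.pi * ((x:ℂ) + Complex.I * b) ^ 2)‖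
      = Real.exp (2 * Real.pi * (x ^ 2 - b ^ 2)) := by
    intro x
    rw [Complex.norm_exp, re_arg]
  set M : ℝ := Real.sqrt (b ^ 2 + 1) with hM
  have hMnn : 0 ≤ M := Real.sqrt_nonneg _
  -- min of ‖D‖ on the compact interval
  obtain ⟨x₀, hx₀, hmin'⟩ := isCompact_Icc.exists_isMinOn (Set.nonempty_Icc.2 (by linarith))
    ((denom_cont b).norm.continuousOn (s := Set.Icc (-M) M))
  have hmin : ∀ x ∈ Set.Icc (-M) M, ‖D x₀‖ ≤ ‖D x‖ := fun x hx => isMinOn_iff.1 hmin' x hx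
  have hc : 0 < ‖D x₀‖ := norm_pos_iff.2 (hne x₀)
  refine ⟨max (2 * Real.exp (2 * Real.pi * b ^ 2)) ((‖D x₀‖)⁻¹ * Real.exp (2 * Real.pi * M ^ 2)),
    lt_max_of_lt_left (by positivity), fun x => ?_⟩
  rw [norm_inv]
  rcases le_or_gt (x ^ 2) (b ^ 2 + 1) with hx | hx
  · -- compact part : |x| ≤ M
    have hxM : x ∈ Set.Icc (-M) M := by
      constructor
      · nlinarith [Real.sq_sqrt (by positivity : (0:ℝ) ≤ b ^ 2 + 1), Real.sqrt_nonneg (b^2+1),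
          sq_nonneg (x + M)]
      · nlinarith [Real.sq_sqrt (by positivity : (0:ℝ) ≤ b ^ 2 + 1), Real.sqrt_nonneg (b^2+1),
          sq_nonneg (x - M)]
    have h1 : ‖D x‖⁻¹ ≤ ‖D x₀‖⁻¹ := by
      apply inv_anti₀ hc (hmin x hxM)
    have h2 : Real.exp (2*Real.pi*M^2) * Real.exp (-(2*Real.pi)*x^2) ≥ 1 := by
      rw [← Real.exp_add]
      have hM2 : M ^ 2 = b ^ 2 + 1 := Real.sq_sqrt (by positivity)
      have : (0:ℝ) ≤ 2*Real.pi*M^2 + -(2*Real.pi)*x^2 := by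
        rw [hM2]; nlinarith [Real.pi_pos]
      calc (1:ℝ) = Real.exp 0 := by simp
        _ ≤ _ := Real.exp_le_exp.2 this
    calc ‖D x‖⁻¹ ≤ ‖D x₀‖⁻¹ := h1
      _ = ‖D x₀‖⁻¹ * 1 := by ring
      _ ≤ ‖D x₀‖⁻¹ * (Real.exp (2*Real.pi*M^2) * Real.exp (-(2*Real.pi)*x^2)) := by
          exact mul_le_mul_of_nonneg_left h2 (by positivity)
      _ = (‖D x₀‖⁻¹ * Real.exp (2*Real.pi*M^2)) * Real.exp (-(2*Real.pi)*x^2) := by ring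
      _ ≤ _ := mul_le_mul_of_nonneg_right (le_max_right _ _) (Real.exp_nonneg _)
  · -- tail : x² > b² + 1
    have hexp2 : (2:ℝ) ≤ Real.exp (2 * Real.pi * (x ^ 2 - b ^ 2)) := by
      have h1 : (2:ℝ) ≤ Real.exp 1 := by
        have := Real.add_one_le_exp 1; linarith
      have : (1:ℝ) ≤ 2 * Real.pi * (x ^ 2 - b ^ 2) := by nlinarith [Real.pi_gt_three]
      calc (2:ℝ) ≤ Real.exp 1 := h1
        _ ≤ _ := Real.exp_le_exp.2 this
    have hlow : Real.exp (2 * Real.pi * (x ^ 2 - b ^ 2)) / 2 ≤ ‖D x‖ := by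
      have := norm_sub_norm_le (Complex.exp (2 * Real.pi * ((x:ℂ) + Complex.I * b) ^ 2)) 1
      rw [hnormexp, norm_one] at this
      have : Real.exp (2 * Real.pi * (x ^ 2 - b ^ 2)) - 1 ≤ ‖D x‖ := this
      linarith
    have hpos : (0:ℝ) < Real.exp (2 * Real.pi * (x ^ 2 - b ^ 2)) / 2 := by positivity
    have h1 : ‖D x‖⁻¹ ≤ (Real.exp (2 * Real.pi * (x ^ 2 - b ^ 2)) / 2)⁻¹ :=
      inv_anti₀ hpos hlow
    have h2 : (Real.exp (2 * Real.pi * (x ^ 2 - b ^ 2)) / 2)⁻¹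
        = 2 * Real.exp (2 * Real.pi * b ^ 2) * Real.exp (-(2 * Real.pi) * x ^ 2) := by
      have key : Real.exp (2*Real.pi*b^2) * Real.exp (-(2*Real.pi)*x^2)
          * Real.exp (2*Real.pi*(x^2-b^2)) = 1 := by
        rw [← Real.exp_add, ← Real.exp_add,
          show 2*Real.pi*b^2 + -(2*Real.pi)*x^2 + 2*Real.pi*(x^2-b^2) = 0 by ring,
          Real.exp_zero]
      rw [inv_div, div_eq_iff (Real.exp_ne_zero _)]
      linear_combination (-2 : ℝ) * key
    calc ‖D x‖⁻¹ ≤ _ := h1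
      _ = 2 * Real.exp (2 * Real.pi * b ^ 2) * Real.exp (-(2 * Real.pi) * x ^ 2) := h2
      _ ≤ _ := mul_le_mul_of_nonneg_right (le_max_left _ _) (Real.exp_nonneg _)


lemma master_int (b C c : ℝ) (hC : 0 ≤ C) (hc : 0 ≤ c) (hb : 0 ≤ b) :
    Integrable fun x : ℝ => (|x| + b + 1) * Real.exp (c * (|x| + b)) *
      (C * Real.exp (-(2 * Real.pi) * x ^ 2)) := by
  set K : ℝ := C * Real.exp ((c + 1) * b + (c + 1) ^ 2 / (4 * Real.pi)) with hK
  apply Integrable.mono' ((integrable_exp_neg_mul_sq Real.pi_pos).const_mul K)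
  · apply Continuous.aestronglyMeasurable
    fun_prop
  · filter_upwards with x
    rw [Real.norm_of_nonneg (by positivity)]
    have h1 : |x| + b + 1 ≤ Real.exp (|x| + b) := Real.add_one_le_exp _
    have h2 : 4 * Real.pi * ((c + 1) * |x| - Real.pi * x ^ 2) ≤ (c + 1) ^ 2 := by
      have e : |x| ^ 2 = x ^ 2 := _root_.sq_abs x
      set y := |x| with hy
      rw [← e]
      nlinarith [sq_nonneg (c + 1 - 2 * Real.pi * y), Real.pi_pos]
    have h2' : (c + 1) * |x| - Real.pi * x ^ 2 ≤ (c + 1) ^ 2 / (4 * Real.pi) := by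
      rw [le_div_iff₀ (by positivity)]
      linarith
    calc (|x| + b + 1) * Real.exp (c * (|x| + b)) * (C * Real.exp (-(2 * Real.pi) * x ^ 2))
        ≤ Real.exp (|x| + b) * Real.exp (c * (|x| + b)) *
            (C * Real.exp (-(2 * Real.pi) * x ^ 2)) := by gcongr
      _ = C * (Real.exp (|x| + b) * Real.exp (c * (|x| + b)) *
            Real.exp (-(2 * Real.pi) * x ^ 2)) := by ring
      _ = C * Real.exp ((|x| + b) + c * (|x| + b) + -(2 * Real.pi) * x ^ 2) := by
          rw [← Real.exp_add, ← Real.exp_add]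
      _ ≤ C * Real.exp ((c + 1) * b + (c + 1) ^ 2 / (4 * Real.pi) + -Real.pi * x ^ 2) := by
          apply mul_le_mul_of_nonneg_left _ hC
          apply Real.exp_le_exp.2
          nlinarith [h2', Real.pi_pos, sq_nonneg x]
      _ = K * Real.exp (-Real.pi * x ^ 2) := by
          rw [hK, Real.exp_add]; ring


section aux
variable (b : ℝ)

lemma wnorm (hb0 : 0 < b) (x : ℝ) : ‖(x:ℂ) + Complex.I * b‖ ≤ |x| + b := by
  calc ‖(x:ℂ) + Complex.I * b‖ ≤ ‖(x:ℂ)‖ + ‖Complex.I * (b:ℂ)‖ := norm_add_le _ _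
    _ = |x| + b := by
        rw [norm_mul, Complex.norm_I, one_mul, Complex.norm_real, Complex.norm_real,
          Real.norm_eq_abs, Real.norm_eq_abs, abs_of_pos hb0]

lemma expbound (hb0 : 0 < b) (z : ℂ) (x : ℝ) :
    ‖Complex.exp (Complex.I * z * ((x:ℂ) + Complex.I * b))‖
      ≤ Real.exp (‖z‖ * (|x| + b)) := by
  rw [Complex.norm_exp]
  apply Real.exp_le_exp.2
  calc (Complex.I * z * ((x:ℂ) + Complex.I * b)).re
      ≤ |(Complex.I * z * ((x:ℂ) + Complex.I * b)).re| := le_abs_self _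
    _ ≤ ‖Complex.I * z * ((x:ℂ) + Complex.I * b)‖ := Complex.abs_re_le_norm _
    _ = ‖z‖ * ‖(x:ℂ) + Complex.I * b‖ := by
        rw [norm_mul, norm_mul, Complex.norm_I, one_mul]
    _ ≤ ‖z‖ * (|x| + b) := mul_le_mul_of_nonneg_left (wnorm b hb0 x) (norm_nonneg z)

end aux

end RiemannChi

section
open Complex

/-- Riemann's entire function `χ`: the line integral over `ℝ + ib` of
`e^{izw} / (e^{2πw²} − 1)`, converging absolutely for every `z` and defining
an entire function of `z`. -/
theorem stmt0 (b : ℝ) (hb0 : 0 < b) (hb1 : b < 1 / Real.sqrt 2) :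
    (∀ z : ℂ, Integrable (fun x : ℝ =>
      Complex.exp (Complex.I * z * (x + Complex.I * b)) /
        (Complex.exp (2 * Real.pi * (x + Complex.I * b) ^ 2) - 1))) ∧
    Differentiable ℂ (fun z : ℂ => ∫ x : ℝ,
      Complex.exp (Complex.I * z * (x + Complex.I * b)) /
        (Complex.exp (2 * Real.pi * (x + Complex.I * b) ^ 2) - 1)) := by
  obtain ⟨C, hC, hCb⟩ := inv_bound b hb0 hb1
  have hne := denom_ne b hb0 hb1
  set D : ℝ → ℂ := fun x => Complex.exp (2 * Real.pi * ((x:ℂ) + Complex.I * b) ^ 2) - 1 with hD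
  set F : ℂ → ℝ → ℂ := fun z x => Complex.exp (Complex.I * z * ((x:ℂ) + Complex.I * b)) / D x
    with hF
  have contf : ∀ z : ℂ, Continuous (F z) := by
    intro z
    apply Continuous.div
    · fun_prop
    · fun_prop
    · exact hne
  -- pointwise norm bound for F
  have Fbound : ∀ (c : ℝ), 0 ≤ c → ∀ (z : ℂ), ‖z‖ ≤ c → ∀ x : ℝ,
      ‖F z x‖ ≤ (|x| + b + 1) * Real.exp (c * (|x| + b)) *
        (C * Real.exp (-(2 * Real.pi) * x ^ 2)) := by
    intro c hc z hz x
    have h1 : ‖F z x‖ = ‖Complex.exp (Complex.I * z * ((x:ℂ) + Complex.I * b))‖ * ‖(D x)⁻¹‖ := by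
      rw [hF, norm_div, norm_inv, div_eq_mul_inv]
    rw [h1]
    have h2 : ‖Complex.exp (Complex.I * z * ((x:ℂ) + Complex.I * b))‖
        ≤ Real.exp (c * (|x| + b)) := by
      refine (expbound b hb0 z x).trans (Real.exp_le_exp.2 ?_)
      apply mul_le_mul_of_nonneg_right hz (by positivity)
    calc ‖Complex.exp (Complex.I * z * ((x:ℂ) + Complex.I * b))‖ * ‖(D x)⁻¹‖
        ≤ Real.exp (c * (|x| + b)) * (C * Real.exp (-(2 * Real.pi) * x ^ 2)) :=
          mul_le_mul h2 (hCb x) (norm_nonneg _) (Real.exp_nonneg _)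
      _ ≤ (|x| + b + 1) * (Real.exp (c * (|x| + b)) * (C * Real.exp (-(2 * Real.pi) * x ^ 2))) := by
          apply le_mul_of_one_le_left (by positivity)
          have := abs_nonneg x; linarith
      _ = _ := by ring
  have hint : ∀ z : ℂ, Integrable (F z) := by
    intro z
    apply Integrable.mono' (master_int b C ‖z‖ hC.le (norm_nonneg z) hb0.le)
      ((contf z).aestronglyMeasurable)
    filter_upwards with x
    exact Fbound ‖z‖ (norm_nonneg z) z le_rfl x
  refine ⟨hint, fun z₀ => ?_⟩
  -- derivative data
  set F' : ℂ → ℝ → ℂ := fun z x =>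
    Complex.exp (Complex.I * z * ((x:ℂ) + Complex.I * b)) * (Complex.I * ((x:ℂ) + Complex.I * b))
      / D x with hF'
  have hderiv : ∀ (x : ℝ) (z : ℂ), HasDerivAt (fun z => F z x) (F' z x) z := by
    intro x z
    have h1 : HasDerivAt (fun z : ℂ => Complex.I * z * ((x:ℂ) + Complex.I * b))
        (Complex.I * 1 * ((x:ℂ) + Complex.I * b)) z :=
      ((hasDerivAt_id z).const_mul Complex.I).mul_const _
    have h2 := (h1.cexp).div_const (D x)
    simpa [hF', mul_one] using h2
  have contF' : Continuous (F' z₀) := by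
    apply Continuous.div
    · fun_prop
    · fun_prop
    · exact hne
  have F'bound : ∀ x : ℝ, ∀ z ∈ Metric.ball z₀ 1,
      ‖F' z x‖ ≤ (|x| + b + 1) * Real.exp ((‖z₀‖ + 1) * (|x| + b)) *
        (C * Real.exp (-(2 * Real.pi) * x ^ 2)) := by
    intro x z hz
    have hzn : ‖z‖ ≤ ‖z₀‖ + 1 := by
      have := mem_ball_iff_norm.1 hz
      calc ‖z‖ = ‖z₀ + (z - z₀)‖ := by ring_nf
        _ ≤ ‖z₀‖ + ‖z - z₀‖ := norm_add_le _ _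
        _ ≤ ‖z₀‖ + 1 := by linarith
    have h1 : ‖F' z x‖ = ‖Complex.exp (Complex.I * z * ((x:ℂ) + Complex.I * b))‖ *
        ‖Complex.I * ((x:ℂ) + Complex.I * b)‖ * ‖(D x)⁻¹‖ := by
      rw [hF', norm_div, norm_inv, div_eq_mul_inv, norm_mul]
    rw [h1]
    have h2 : ‖Complex.exp (Complex.I * z * ((x:ℂ) + Complex.I * b))‖
        ≤ Real.exp ((‖z₀‖ + 1) * (|x| + b)) := by
      refine (expbound b hb0 z x).trans (Real.exp_le_exp.2 ?_)
      apply mul_le_mul_of_nonneg_right hzn (by positivity)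
    have h3 : ‖Complex.I * ((x:ℂ) + Complex.I * b)‖ ≤ |x| + b + 1 := by
      rw [norm_mul, Complex.norm_I, one_mul]
      have := wnorm b hb0 x
      linarith
    calc ‖Complex.exp (Complex.I * z * ((x:ℂ) + Complex.I * b))‖ *
          ‖Complex.I * ((x:ℂ) + Complex.I * b)‖ * ‖(D x)⁻¹‖
        ≤ Real.exp ((‖z₀‖ + 1) * (|x| + b)) * (|x| + b + 1) *
            (C * Real.exp (-(2 * Real.pi) * x ^ 2)) := by
          apply mul_le_mul (mul_le_mul h2 h3 (norm_nonneg _) (Real.exp_nonneg _)) (hCb x)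
            (norm_nonneg _) (by positivity)
      _ = _ := by ring
  have key := hasDerivAt_integral_of_dominated_loc_of_deriv_le (μ := volume)
    (F := F) (F' := F') (x₀ := z₀)
    (bound := fun x => (|x| + b + 1) * Real.exp ((‖z₀‖ + 1) * (|x| + b)) *
      (C * Real.exp (-(2 * Real.pi) * x ^ 2)))
    (Metric.ball_mem_nhds z₀ one_pos)
    (Filter.Eventually.of_forall fun z => (contf z).aestronglyMeasurable)
    (hint z₀)
    contF'.aestronglyMeasurable
    (Filter.Eventually.of_forall fun x => fun z hz => F'bound x z hz)
    (master_int b C (‖z₀‖ + 1) hC.le (by positivity) hb0.le)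
    (Filter.Eventually.of_forall fun x => fun z _ => hderiv x z)
  exact key.2.differentiableAt

end
end

section
/- For fixed z with |z| ≤ R and w = x + ib with ε < b < 1/√2 − ε (where 0 < ε < 1/√2), there is a constant C = C(R, ε) such that |e^{izw}/(e^{2πw²}−1)| ≤ C e^{−πx²} for all real x. -/
theorem denom_ne_one' (ε : ℝ) (hε0 : 0 < ε) (b : ℝ) (hb1 : ε ≤ b)
    (hb2 : b ≤ 1 / Real.sqrt 2 - ε) (x : ℝ) :
    Complex.exp (2 * Real.pi * ((x:ℂ) + Complex.I * b) ^ 2) ≠ 1 := by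
  intro h
  rw [Complex.exp_eq_one_iff] at h
  obtain ⟨n, hn⟩ := h
  rw [Complex.ext_iff] at hn
  obtain ⟨h1, h2⟩ := hn
  simp [Complex.mul_re, Complex.mul_im, pow_two] at h1 h2
  have hb0 : 0 < b := lt_of_lt_of_le hε0 hb1
  have hs : (0:ℝ) < Real.sqrt 2 := by positivity
  have hbu : b < 1 / Real.sqrt 2 := by linarith
  have hbs : b * Real.sqrt 2 < 1 := (lt_div_iff₀ hs).mp hbu
  have hbsq : b * b < 1 / 2 := by nlinarith [Real.sq_sqrt (show (0:ℝ) ≤ 2 by norm_num)]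
  have h1' : x * x = b * b := by
    linarith
  have h2' : x * b + b * x = (n:ℝ) := by
    have h2π : (2 * Real.pi) ≠ 0 := by positivity
    exact mul_left_cancel₀ h2π (by linear_combination h2)
  have hn0 : n ≠ 0 := by
    intro h
    subst h
    push_cast at h2'
    have hx : x * b = 0 := by linarith
    have h4 : b*b*(b*b) = 0 := by nlinarith [hx, h1']
    nlinarith [mul_pos (mul_pos hb0 hb0) (mul_pos hb0 hb0)]
  have hnsq : (1:ℝ) ≤ (n:ℝ)^2 := by
    have h5 : (1:ℤ) ≤ |n| := Int.one_le_abs hn0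
    have h6 : (1:ℝ) ≤ |(n:ℝ)| := by exact_mod_cast h5
    nlinarith [abs_nonneg (n:ℝ), sq_abs (n:ℝ)]
  have hq : (n:ℝ)^2 = 4*(b*b)*(b*b) := by
    rw [← h2']; nlinarith [h1']
  nlinarith

set_option maxHeartbeats 1600000 in
/-- For `|z| ≤ R` and `w = x + ib` with `ε < b < 1/√2 − ε`, there is a constant
`C = C(R, ε)` with `|e^{izw}/(e^{2πw²}−1)| ≤ C e^{−πx²}` for all real `x`. -/
theorem stmt1 (R : ℝ) (hR : 0 < R) (ε : ℝ) (hε0 : 0 < ε) (hε1 : ε < 1 / Real.sqrt 2) :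
    ∃ C : ℝ, 0 < C ∧ ∀ z : ℂ, ‖z‖ ≤ R → ∀ b : ℝ, ε < b → b < 1 / Real.sqrt 2 - ε →
      ∀ x : ℝ,
        ‖Complex.exp (Complex.I * z * (x + Complex.I * b)) /
          (Complex.exp (2 * Real.pi * (x + Complex.I * b) ^ 2) - 1)‖
          ≤ C * Real.exp (-Real.pi * x ^ 2) := by
  have hπ := Real.pi_pos
  have hπ3 := Real.pi_gt_three
  have hs : (0:ℝ) < Real.sqrt 2 := by positivity
  have hs2 : Real.sqrt 2 * Real.sqrt 2 = 2 := Real.mul_self_sqrt (by norm_num)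
  have hs1 : (1:ℝ) < Real.sqrt 2 := by nlinarith
  by_cases hcase : ε ≤ 1 / Real.sqrt 2 - ε
  swap
  · exact ⟨1, one_pos, fun z hz b hb1 hb2 x => absurd (by linarith : ε ≤ 1/Real.sqrt 2 - ε) hcase⟩
  -- compact minimum of the denominator norm
  set f : ℝ × ℝ → ℝ := fun p => ‖Complex.exp (2*Real.pi*((p.1:ℂ)+Complex.I*p.2)^2) - 1‖ with hf
  have hK : IsCompact ((Set.Icc (-1:ℝ) 1) ×ˢ (Set.Icc ε (1/Real.sqrt 2 - ε))) :=
    isCompact_Icc.prod isCompact_Icc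
  have hKne : ((0:ℝ), ε) ∈ (Set.Icc (-1:ℝ) 1) ×ˢ (Set.Icc ε (1/Real.sqrt 2 - ε)) := by
    constructor
    · constructor <;> norm_num
    · exact ⟨le_refl _, hcase⟩
  have hcont : ContinuousOn f ((Set.Icc (-1:ℝ) 1) ×ˢ (Set.Icc ε (1/Real.sqrt 2 - ε))) := by
    apply Continuous.continuousOn
    fun_prop
  obtain ⟨p, hpK, hminOn⟩ := hK.exists_isMinOn ⟨_, hKne⟩ hcont
  have hmin : ∀ q ∈ (Set.Icc (-1:ℝ) 1) ×ˢ (Set.Icc ε (1/Real.sqrt 2 - ε)), f p ≤ f q := hminOn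
  have hm : 0 < f p := by
    rw [hf]
    refine norm_pos_iff.mpr (sub_ne_zero.mpr ?_)
    exact denom_ne_one' ε hε0 p.2 hpK.2.1 hpK.2.2 p.1
  refine ⟨Real.exp (2*R + Real.pi)/(f p) + 2*Real.exp (R + Real.pi + R^2/(4*Real.pi)),
    by positivity, ?_⟩
  intro z hz b hb1 hb2 x
  have hb0 : 0 < b := hε0.trans hb1
  have hb_lt : b < 1 := by
    have : 1 / Real.sqrt 2 < 1 := by
      rw [div_lt_one hs]; exact hs1
    linarith
  have hbsq : b^2 < 1/2 := by
    have hbu : b < 1 / Real.sqrt 2 := by linarith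
    have hbs : b * Real.sqrt 2 < 1 := (lt_div_iff₀ hs).mp hbu
    nlinarith
  -- numerator bound
  have hnum : ‖Complex.exp (Complex.I * z * ((x:ℂ) + Complex.I * b))‖
      ≤ Real.exp (R*|x| + R) := by
    rw [Complex.norm_exp]
    apply Real.exp_le_exp.mpr
    have hre : (Complex.I * z * ((x:ℂ) + Complex.I * b)).re
        = -(z*((x:ℂ)+Complex.I*b)).im := by
      rw [mul_assoc]; simp
    rw [hre]
    have h1 : |(z*((x:ℂ)+Complex.I*b)).im| ≤ ‖z‖ * ‖(x:ℂ)+Complex.I*b‖ := by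
      rw [← norm_mul]
      exact Complex.abs_im_le_norm _
    have hw : ‖(x:ℂ)+Complex.I*b‖ ≤ |x| + 1 := by
      calc ‖(x:ℂ)+Complex.I*b‖ ≤ ‖(x:ℂ)‖ + ‖Complex.I*(b:ℂ)‖ := norm_add_le _ _
      _ = |x| + |b| := by simp
      _ ≤ |x| + 1 := by rw [abs_of_pos hb0]; linarith
    have h2 : ‖z‖ * ‖(x:ℂ)+Complex.I*b‖ ≤ R * (|x| + 1) :=
      mul_le_mul hz hw (norm_nonneg _) hR.le
    have h3 := neg_abs_le (z*((x:ℂ)+Complex.I*b)).im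
    nlinarith
  -- denominator modulus
  have hD : ‖Complex.exp (2*(Real.pi:ℂ)*((x:ℂ)+Complex.I*b)^2)‖
      = Real.exp (2*Real.pi*(x^2-b^2)) := by
    rw [Complex.norm_exp]
    congr 1
    simp [Complex.mul_re, Complex.mul_im, pow_two]
  rcases le_or_gt (|x|) 1 with hx | hx
  · -- compact region
    have hmem : ((x, b) : ℝ × ℝ) ∈ (Set.Icc (-1:ℝ) 1) ×ˢ (Set.Icc ε (1/Real.sqrt 2 - ε)) := by
      refine ⟨?_, hb1.le, hb2.le⟩
      exact abs_le.mp hx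
    have hden : f p ≤ ‖Complex.exp (2*(Real.pi:ℂ)*((x:ℂ)+Complex.I*b)^2) - 1‖ :=
      hmin (x, b) hmem
    have hxx : x^2 ≤ 1 := by nlinarith [sq_abs x, abs_nonneg x]
    rw [norm_div]
    calc ‖Complex.exp (Complex.I * z * ((x:ℂ) + Complex.I * b))‖
          / ‖Complex.exp (2*(Real.pi:ℂ)*((x:ℂ)+Complex.I*b)^2) - 1‖
        ≤ Real.exp (R*|x| + R) / (f p) := div_le_div₀ (Real.exp_nonneg _) hnum hm hden
      _ ≤ Real.exp (2*R) / (f p) := by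
          gcongr
          nlinarith
      _ = (Real.exp (2*R + Real.pi)/(f p)) * Real.exp (-Real.pi) := by
          rw [div_mul_eq_mul_div, ← Real.exp_add]
          ring_nf
      _ ≤ (Real.exp (2*R + Real.pi)/(f p)) * Real.exp (-Real.pi * x^2) := by
          apply mul_le_mul_of_nonneg_left _ (by positivity)
          apply Real.exp_le_exp.mpr; nlinarith
      _ ≤ _ := by
          apply mul_le_mul_of_nonneg_right _ (Real.exp_nonneg _)
          nlinarith [Real.exp_pos (R + Real.pi + R^2/(4*Real.pi))]
  · -- |x| > 1
    have hxsq : 1 ≤ x^2 := by nlinarith [sq_abs x, abs_nonneg x]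
    have hDbig : Real.exp (2*Real.pi*x^2 - Real.pi)
        ≤ ‖Complex.exp (2*(Real.pi:ℂ)*((x:ℂ)+Complex.I*b)^2)‖ := by
      rw [hD]; apply Real.exp_le_exp.mpr; nlinarith
    have h2exp : (2:ℝ) ≤ Real.exp (2*Real.pi*x^2 - Real.pi) := by
      have h := Real.add_one_le_exp (2*Real.pi*x^2 - Real.pi)
      nlinarith
    have hden : Real.exp (2*Real.pi*x^2 - Real.pi)/2
        ≤ ‖Complex.exp (2*(Real.pi:ℂ)*((x:ℂ)+Complex.I*b)^2) - 1‖ := by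
      have h := norm_sub_norm_le (Complex.exp (2*(Real.pi:ℂ)*((x:ℂ)+Complex.I*b)^2)) 1
      rw [norm_one] at h
      linarith
    rw [norm_div]
    calc ‖Complex.exp (Complex.I * z * ((x:ℂ) + Complex.I * b))‖
          / ‖Complex.exp (2*(Real.pi:ℂ)*((x:ℂ)+Complex.I*b)^2) - 1‖
        ≤ Real.exp (R*|x| + R) / (Real.exp (2*Real.pi*x^2 - Real.pi)/2) :=
          div_le_div₀ (Real.exp_nonneg _) hnum (by positivity) hden
      _ = 2 * Real.exp (R*|x| + R - (2*Real.pi*x^2 - Real.pi)) := by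
          rw [Real.exp_sub (R*|x| + R) (2*Real.pi*x^2 - Real.pi), div_div_eq_mul_div]
          ring
      _ ≤ 2 * Real.exp (R + Real.pi + R^2/(4*Real.pi) + (-Real.pi * x^2)) := by
          gcongr
          have hkey : R*|x| - Real.pi*x^2 ≤ R^2/(4*Real.pi) := by
            rw [le_div_iff₀ (by positivity : (0:ℝ) < 4*Real.pi), ← sq_abs x]
            nlinarith [sq_nonneg (2*Real.pi*|x| - R)]
          linarith
      _ = 2*Real.exp (R + Real.pi + R^2/(4*Real.pi)) * Real.exp (-Real.pi * x^2) := by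
          rw [Real.exp_add]; ring
      _ ≤ _ := by
          apply mul_le_mul_of_nonneg_right _ (Real.exp_nonneg _)
          have := div_pos (Real.exp_pos (2*R + Real.pi)) hm
          linarith
end

section
/- For all z ∈ ℂ, z/2 + (1/√2) ∑_{n=0}^∞ (ζ(n+1/2)/n!) (−z²/(8π))^n = ∑_{m=0}^∞ (z^m ζ((1−m)/2)/m!) · cos((3m+1)π/4), where for m odd ζ((1−m)/2) denotes the analytic continuation of zeta (with the m=1 term interpreted via the pole: the coefficient of z is 1/2). -/
open Complex Real

noncomputable section


lemma gamma_half (n : ℕ) :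
    Complex.Gamma ((n : ℂ) + 1 / 2)
      = (Real.sqrt Real.pi : ℂ) * (2 * n).factorial / (4 ^ n * n.factorial) := by
  induction n with
  | zero =>
    rw [show ((0 : ℕ) : ℂ) + 1 / 2 = 1 / 2 by norm_num, Complex.Gamma_one_half_eq,
      show (1 / 2 : ℂ) = ((1 / 2 : ℝ) : ℂ) by norm_num, ← Complex.ofReal_cpow Real.pi_pos.le,
      ← Real.sqrt_eq_rpow]
    simp
  | succ n ih =>
    have hne : ((n : ℂ) + 1 / 2) ≠ 0 := by
      intro h
      have := congrArg Complex.re h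
      simp at this
      nlinarith [Nat.cast_nonneg (α := ℝ) n]
    have h1 : ((n + 1 : ℕ) : ℂ) + 1 / 2 = ((n : ℂ) + 1 / 2) + 1 := by push_cast; ring
    rw [h1, Complex.Gamma_add_one _ hne, ih]
    have h2 : ((2 * (n + 1)).factorial : ℂ)
        = (2 * n + 2) * (2 * n + 1) * ((2 * n).factorial : ℂ) := by
      have : 2 * (n + 1) = (2 * n + 1) + 1 := by ring
      rw [this, Nat.factorial_succ, Nat.factorial_succ]; push_cast; ring
    have h3 : ((n + 1).factorial : ℂ) = (n + 1) * (n.factorial : ℂ) := by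
      rw [Nat.factorial_succ]; push_cast; ring
    have hf1 : ((2 * n).factorial : ℂ) ≠ 0 := by exact_mod_cast (Nat.factorial_pos _).ne'
    have hf2 : ((n).factorial : ℂ) ≠ 0 := by exact_mod_cast (Nat.factorial_pos _).ne'
    have h4 : ((n : ℂ) + 1) ≠ 0 := Nat.cast_add_one_ne_zero n
    rw [h2, h3]
    field_simp
    ring



lemma cos_prod (n : ℕ) :
    Complex.cos ((3 * ((2 * n : ℕ) : ℂ) + 1) * (Real.pi : ℂ) / 4) *
      Complex.cos ((Real.pi : ℂ) * ((n : ℂ) + 1 / 2) / 2) = (-1) ^ n / 2 := by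
  set A : ℂ := (3 * ((2 * n : ℕ) : ℂ) + 1) * (Real.pi : ℂ) / 4 with hA
  set B : ℂ := (Real.pi : ℂ) * ((n : ℂ) + 1 / 2) / 2 with hB
  have h1 : Complex.cos (A + B) = 0 := by
    have e : A + B = (Real.pi : ℂ) / 2 + (n : ℕ) * (2 * (Real.pi : ℂ)) := by
      rw [hA, hB]; push_cast; ring
    rw [e, Complex.cos_add_nat_mul_two_pi, Complex.cos_pi_div_two]
  have h2 : Complex.cos (A - B) = (-1) ^ n := by
    have e : A - B = 0 + (n : ℕ) * (Real.pi : ℂ) := by rw [hA, hB]; push_cast; ring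
    rw [e, Complex.cos_antiperiodic.add_nat_mul_eq, Complex.cos_zero, mul_one]
  have e3 := Complex.cos_add A B
  have e4 := Complex.cos_sub A B
  rw [h1] at e3; rw [h2] at e4
  linear_combination -(e3 + e4) / 2

lemma key' (n : ℕ) :
    riemannZeta ((1 - ((2 * n : ℕ) : ℂ)) / 2) *
        Complex.cos ((3 * ((2 * n : ℕ) : ℂ) + 1) * (Real.pi : ℂ) / 4) *
        ((Real.sqrt 2 : ℂ) * 4 ^ n * (2 * (Real.pi : ℂ)) ^ n * (n.factorial : ℂ))
      = (-1) ^ n * ((2 * n).factorial : ℂ) * riemannZeta ((n : ℂ) + 1 / 2) := by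
  have hr : ((n : ℂ) + 1 / 2) = (((n : ℝ) + 1 / 2 : ℝ) : ℂ) := by push_cast; ring
  have hs1 : ∀ k : ℕ, ((n : ℂ) + 1 / 2) ≠ -(k : ℂ) := by
    intro k h
    rw [hr, show -(k : ℂ) = ((-(k : ℝ) : ℝ) : ℂ) by push_cast; ring,
      Complex.ofReal_inj] at h
    nlinarith [Nat.cast_nonneg (α := ℝ) n, Nat.cast_nonneg (α := ℝ) k]
  have hs2 : ((n : ℂ) + 1 / 2) ≠ 1 := by
    intro h
    rw [hr, show (1 : ℂ) = ((1 : ℝ) : ℂ) by norm_num, Complex.ofReal_inj] at h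
    have h2 : (2 * n + 1 : ℝ) = 2 := by linarith
    have h3 : (2 * n + 1 : ℕ) = 2 := by exact_mod_cast h2
    omega
  have hfe := riemannZeta_one_sub (s := (n : ℂ) + 1 / 2) hs1 hs2
  have h1s : (1 : ℂ) - ((n : ℂ) + 1 / 2) = (1 - ((2 * n : ℕ) : ℂ)) / 2 := by push_cast; ring
  have h2p : (0 : ℝ) < 2 * Real.pi := by positivity
  have hpow : (2 * (Real.pi : ℂ)) ^ (-((n : ℂ) + 1 / 2)) *
      ((2 * (Real.pi : ℂ)) ^ n * (Real.sqrt 2 : ℂ) * (Real.sqrt Real.pi : ℂ)) = 1 := by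
    have h1 : (2 * (Real.pi : ℂ)) ^ (-((n : ℂ) + 1 / 2))
        = ((2 * (Real.pi : ℂ)) ^ n)⁻¹ * ((Real.sqrt 2 : ℂ))⁻¹ * ((Real.sqrt Real.pi : ℂ))⁻¹ := by
      rw [show (2 * (Real.pi : ℂ)) = (((2 * Real.pi : ℝ)) : ℂ) by push_cast; ring,
        show -((n : ℂ) + 1 / 2) = ((-((n : ℝ) + 1 / 2) : ℝ) : ℂ) by push_cast; ring,
        ← Complex.ofReal_cpow h2p.le]
      rw [Real.rpow_neg h2p.le, Real.rpow_add h2p, Real.rpow_natCast,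
        ← Real.rpow_natCast (2 * Real.pi) n]
      have h2 : (2 * Real.pi) ^ ((1 : ℝ) / 2) = Real.sqrt 2 * Real.sqrt Real.pi := by
        rw [← Real.sqrt_eq_rpow, Real.sqrt_mul (by norm_num : (0:ℝ) ≤ 2)]
      rw [h2]
      push_cast [Real.rpow_natCast]
      rw [mul_inv]
      ring
    rw [h1]
    have hsq2 : ((Real.sqrt 2 : ℝ) : ℂ) ≠ 0 := by
      simp [Real.sqrt_eq_zero']
    have hsqpi : ((Real.sqrt Real.pi : ℝ) : ℂ) ≠ 0 := by
      simp [Real.sqrt_eq_zero']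
      positivity
    have h2pn : (2 * (Real.pi : ℂ)) ^ n ≠ 0 := by
      apply pow_ne_zero
      have : ((Real.pi : ℝ) : ℂ) ≠ 0 := by simp [Real.pi_ne_zero]
      exact mul_ne_zero two_ne_zero this
    field_simp
  have hG : Complex.Gamma ((n : ℂ) + 1 / 2) * (4 ^ n * (n.factorial : ℂ))
      = (Real.sqrt Real.pi : ℂ) * ((2 * n).factorial : ℂ) := by
    rw [gamma_half n]
    have hf2 : ((n).factorial : ℂ) ≠ 0 := by exact_mod_cast (Nat.factorial_pos _).ne'
    have h4 : (4 : ℂ) ^ n ≠ 0 := by norm_num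
    field_simp
  rw [h1s] at hfe
  rw [hfe]
  linear_combination
    (2 * (2 * (Real.pi : ℂ)) ^ (-((n : ℂ) + 1 / 2)) *
      Complex.cos ((Real.pi : ℂ) * ((n : ℂ) + 1 / 2) / 2) *
      Complex.cos ((3 * ((2 * n : ℕ) : ℂ) + 1) * (Real.pi : ℂ) / 4) *
      riemannZeta ((n : ℂ) + 1 / 2) * (Real.sqrt 2 : ℂ) * (2 * (Real.pi : ℂ)) ^ n) * hG
    + (2 * Complex.cos ((Real.pi : ℂ) * ((n : ℂ) + 1 / 2) / 2) *
      Complex.cos ((3 * ((2 * n : ℕ) : ℂ) + 1) * (Real.pi : ℂ) / 4) *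
      riemannZeta ((n : ℂ) + 1 / 2) * ((2 * n).factorial : ℂ)) * hpow
    + (2 * riemannZeta ((n : ℂ) + 1 / 2) * ((2 * n).factorial : ℂ)) * (cos_prod n)



lemma zeta_norm_le (s : ℂ) (hs : 3 / 2 ≤ s.re) :
    ‖riemannZeta s‖ ≤ ∑' n : ℕ, ((n : ℝ) + 1) ^ (-(3 / 2 : ℝ)) := by
  have hs1 : 1 < s.re := by linarith
  have hsum32 : Summable (fun n : ℕ => ((n : ℝ) + 1) ^ (-(3 / 2 : ℝ))) := by
    have h0 : Summable (fun n : ℕ => (n : ℝ) ^ (-(3 / 2 : ℝ))) :=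
      Real.summable_nat_rpow.mpr (by norm_num)
    have h := (summable_nat_add_iff 1).mpr h0
    exact h.congr fun n => by push_cast; norm_num
  have hnorm : ∀ n : ℕ, ‖1 / ((n : ℂ) + 1) ^ s‖ = ((n : ℝ) + 1) ^ (-s.re) := by
    intro n
    rw [norm_div, norm_one,
      show ((n : ℂ) + 1) = (((n : ℝ) + 1 : ℝ) : ℂ) by push_cast; ring,
      Complex.norm_cpow_eq_rpow_re_of_pos (by positivity),
      Real.rpow_neg (by positivity), one_div]
  have hle : ∀ n : ℕ, ((n : ℝ) + 1) ^ (-s.re) ≤ ((n : ℝ) + 1) ^ (-(3 / 2 : ℝ)) := by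
    intro n
    apply Real.rpow_le_rpow_of_exponent_le
    · have : (0:ℝ) ≤ (n:ℝ) := Nat.cast_nonneg n
      linarith
    · linarith
  have hsumnorm : Summable (fun n : ℕ => ‖1 / ((n : ℂ) + 1) ^ s‖) := by
    apply hsum32.of_nonneg_of_le (fun n => norm_nonneg _)
    intro n
    rw [hnorm n]
    exact hle n
  rw [zeta_eq_tsum_one_div_nat_add_one_cpow hs1]
  refine (norm_tsum_le_tsum_norm hsumnorm).trans ?_
  refine hsumnorm.tsum_le_tsum ?_ hsum32
  intro n
  rw [hnorm n]
  exact hle n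

lemma g_summable (z : ℂ) :
    Summable (fun n : ℕ =>
      riemannZeta ((n : ℂ) + 1 / 2) / (n.factorial : ℂ) * (-z ^ 2 / (8 * (Real.pi : ℂ))) ^ n) := by
  set w : ℂ := -z ^ 2 / (8 * (Real.pi : ℂ)) with hw
  set C : ℝ := ∑' n : ℕ, ((n : ℝ) + 1) ^ (-(3 / 2 : ℝ)) with hC
  rw [← summable_nat_add_iff 1]
  apply Summable.of_norm_bounded (g := fun n : ℕ => C * (‖w‖ ^ (n + 1) / (n + 1).factorial))
  · exact (((summable_nat_add_iff 1).mpr (Real.summable_pow_div_factorial ‖w‖))).mul_left C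
  · intro n
    rw [norm_mul, norm_div, norm_pow]
    have harg : (((n + 1 : ℕ) : ℂ) + 1 / 2) = (((n : ℝ) + 3 / 2 : ℝ) : ℂ) := by push_cast; ring
    have hz : ‖riemannZeta (((n + 1 : ℕ) : ℂ) + 1 / 2)‖ ≤ C := by
      rw [harg]
      apply zeta_norm_le
      rw [Complex.ofReal_re]
      have : (0:ℝ) ≤ (n:ℝ) := Nat.cast_nonneg n
      linarith
    have hfn : ‖(((n + 1 : ℕ).factorial : ℂ))‖ = ((n + 1).factorial : ℝ) := by
      rw [Complex.norm_natCast]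
    rw [hfn]
    have hfp : (0:ℝ) < ((n + 1).factorial : ℝ) := by exact_mod_cast (Nat.factorial_pos _)
    calc ‖riemannZeta (((n + 1 : ℕ) : ℂ) + 1 / 2)‖ / ((n + 1).factorial : ℝ) * ‖w‖ ^ (n + 1)
        ≤ C / ((n + 1).factorial : ℝ) * ‖w‖ ^ (n + 1) := by gcongr
      _ = C * (‖w‖ ^ (n + 1) / (n + 1).factorial) := by ring


private def F (z : ℂ) : ℕ → ℂ := fun m => if m = 1 then z / 2 else
  z ^ m * riemannZeta ((1 - (m : ℂ)) / 2) / (m.factorial : ℂ)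
    * Complex.cos ((3 * (m : ℂ) + 1) * (Real.pi : ℂ) / 4)

lemma heven (z : ℂ) (k : ℕ) : F z (2 * k)
    = 1 / (Real.sqrt 2 : ℂ) *
      (riemannZeta ((k : ℂ) + 1 / 2) / (k.factorial : ℂ) * (-z ^ 2 / (8 * (Real.pi : ℂ))) ^ k) := by
  rw [F, if_neg (by omega)]
  have hk := key' k
  have hsq2 : ((Real.sqrt 2 : ℝ) : ℂ) ≠ 0 := by simp [Real.sqrt_eq_zero']
  have hf1 : ((2 * k).factorial : ℂ) ≠ 0 := by exact_mod_cast (Nat.factorial_pos _).ne'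
  have hf2 : ((k).factorial : ℂ) ≠ 0 := by exact_mod_cast (Nat.factorial_pos _).ne'
  have hpi : ((Real.pi : ℝ) : ℂ) ≠ 0 := by simp [Real.pi_ne_zero]
  have h2pk : (2 * (Real.pi : ℂ)) ^ k ≠ 0 := pow_ne_zero _ (mul_ne_zero two_ne_zero hpi)
  have h4k : (4 : ℂ) ^ k ≠ 0 := by norm_num
  rw [pow_mul z 2 k, show -z ^ 2 / (8 * (Real.pi : ℂ)) = -z ^ 2 / (4 * (2 * (Real.pi : ℂ))) by
    ring_nf, div_pow, neg_pow, mul_pow]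
  generalize hZ1 : riemannZeta ((1 - ((2 * k : ℕ) : ℂ)) / 2) = Z1 at hk ⊢
  generalize hZ2 : riemannZeta ((k : ℂ) + 1 / 2) = Z2 at hk ⊢
  generalize hCA : Complex.cos ((3 * ((2 * k : ℕ) : ℂ) + 1) * (Real.pi : ℂ) / 4) = CA at hk ⊢
  field_simp
  linear_combination (z ^ 2) ^ k * hk


lemma Fodd (z : ℂ) (k : ℕ) (hk : k ≠ 0) : F z (2 * k + 1) = 0 := by
  rw [F, if_neg (by omega)]
  rcases Nat.even_or_odd k with ⟨j, hj⟩ | ⟨j, hj⟩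
  · obtain ⟨i, hi⟩ : ∃ i, k = 2 * i + 2 := ⟨j - 1, by omega⟩
    rw [show ((1 - ((2 * k + 1 : ℕ) : ℂ)) / 2) = -2 * ((i : ℂ) + 1) by
      push_cast [hi]; ring, riemannZeta_neg_two_mul_nat_add_one]
    simp
  · rw [show ((3 * ((2 * k + 1 : ℕ) : ℂ) + 1) * (Real.pi : ℂ) / 4)
        = (Real.pi : ℂ) / 2 + ((3 * j + 2 : ℕ) : ℂ) * (Real.pi : ℂ) by push_cast [hj]; ring,
      Complex.cos_antiperiodic.add_nat_mul_eq, Complex.cos_pi_div_two]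
    simp

end

/-- For all `z ∈ ℂ`,
`z/2 + (1/√2) ∑_{n=0}^∞ (ζ(n+1/2)/n!) (−z²/(8π))^n
  = ∑_{m=0}^∞ (z^m ζ((1−m)/2)/m!) cos((3m+1)π/4)`,
where `ζ` is the analytically continued zeta and the `m = 1` term is interpreted
via the pole: the coefficient of `z` is `1/2`. -/
theorem stmt11 (z : ℂ) :
    z / 2 + (1 / Real.sqrt 2) *
        ∑' n : ℕ, riemannZeta (n + 1 / 2) / (n.factorial : ℂ) * (-z ^ 2 / (8 * Real.pi)) ^ n
      = ∑' m : ℕ, if m = 1 then z / 2 else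
          z ^ m * riemannZeta ((1 - m) / 2) / (m.factorial : ℂ)
            * Complex.cos ((3 * m + 1) * Real.pi / 4) := by
  have he : Summable (fun k : ℕ => F z (2 * k)) := by
    apply ((g_summable z).mul_left (1 / (Real.sqrt 2 : ℂ))).congr
    intro k
    exact (heven z k).symm
  have ho : Summable (fun k : ℕ => F z (2 * k + 1)) := by
    apply summable_of_ne_finset_zero (s := {0})
    intro k hk
    simp only [Finset.mem_singleton] at hk
    exact Fodd z k hk
  have h1 : (∑' m : ℕ, if m = 1 then z / 2 else
          z ^ m * riemannZeta ((1 - m) / 2) / (m.factorial : ℂ)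
            * Complex.cos ((3 * m + 1) * Real.pi / 4)) = ∑' m : ℕ, F z m := rfl
  rw [h1, ← tsum_even_add_odd he ho]
  have h2 : (∑' k : ℕ, F z (2 * k)) = (1 / (Real.sqrt 2 : ℂ)) *
      ∑' n : ℕ, riemannZeta ((n : ℂ) + 1 / 2) / (n.factorial : ℂ)
        * (-z ^ 2 / (8 * (Real.pi : ℂ))) ^ n := by
    rw [← tsum_mul_left]
    exact tsum_congr (heven z)
  have h3 : (∑' k : ℕ, F z (2 * k + 1)) = z / 2 := by
    have h : ∀ k : ℕ, F z (2 * k + 1) = if k = 0 then z / 2 else 0 := by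
      intro k
      rcases eq_or_ne k 0 with h | h
      · subst h
        norm_num [F]
      · rw [Fodd z k h, if_neg h]
    rw [tsum_congr h, tsum_ite_eq]
  rw [h2, h3, add_comm]
end
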